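/- arXiv:2308.03885 — 5 statements merged into one kernel-verified Lean document; each statement's English description precedes it below -/
import Mathlib

section
/- Let f : ℝ → ℂ be continuously differentiable, δ > 0, and let I = [a,b] be an interval on which each of the functions Re f, (Re f)', Im f, (Im f)', (Re f)' − (Im f)', and (Re f)' + (Im f)' is either everywhere nonnegative or everywhere nonpositive. Then for every β ∈ [a + δ, b − δ], |f(β)| ≥ (δ/√2) · min_{α ∈ I} |f'(α)|. -/
open Set

lemma aux_pos (g : ℝ → ℝ) (a b δ β c : ℝ) (hδ : 0 < δ) (hc : 0 ≤ c)
    (hβ : β ∈ Icc (a + δ) (b - δ))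
    (hg : Differentiable ℝ g)
    (hder : ∀ x ∈ Icc a b, c ≤ deriv g x)
    (hsign : (∀ x ∈ Icc a b, 0 ≤ g x) ∨ (∀ x ∈ Icc a b, g x ≤ 0)) :
    δ * c ≤ |g β| := by
  have haβ : a + δ ≤ β := hβ.1
  have hβb : β ≤ b - δ := hβ.2
  have haI : a ∈ Icc a b := ⟨le_refl a, by linarith⟩
  have hbI : b ∈ Icc a b := ⟨by linarith, le_refl b⟩
  have hβI : β ∈ Icc a b := ⟨by linarith, by linarith⟩
  have hgd : Differentiable ℝ (fun x => g x - c * x) := by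
    apply hg.sub
    exact (differentiable_id.const_mul c)
  have hkey : ∀ x, deriv (fun x => g x - c * x) x = deriv g x - c := by
    intro x
    have h : HasDerivAt (fun x => g x - c * x) (deriv g x - c) x := by
      have := (hg x).hasDerivAt.sub ((hasDerivAt_id x).const_mul c)
      rw [mul_one] at this
      exact this
    exact h.deriv
  have hmono : MonotoneOn (fun x => g x - c * x) (Icc a b) := by
    apply monotoneOn_of_deriv_nonneg (convex_Icc a b) hgd.continuous.continuousOn
    · intro x hx
      exact (hgd x).differentiableWithinAt
    · intro x hx
      rw [interior_Icc] at hx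
      have hx' : x ∈ Icc a b := Ioo_subset_Icc_self hx
      rw [hkey]
      linarith [hder x hx']
  rcases hsign with hs | hs
  · have h1 := hmono haI hβI (by linarith)
    have h2 := hs a haI
    simp only at h1
    have : δ * c ≤ g β := by nlinarith
    calc δ * c ≤ g β := this
      _ ≤ |g β| := le_abs_self _
  · have h1 := hmono hβI hbI (by linarith)
    have h2 := hs b hbI
    simp only at h1
    have : g β ≤ -(δ * c) := by nlinarith
    calc δ * c ≤ -(g β) := by linarith
      _ ≤ |g β| := neg_le_abs _

lemma aux_neg (g : ℝ → ℝ) (a b δ β c : ℝ) (hδ : 0 < δ) (hc : 0 ≤ c)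
    (hβ : β ∈ Icc (a + δ) (b - δ))
    (hg : Differentiable ℝ g)
    (hder : ∀ x ∈ Icc a b, deriv g x ≤ -c)
    (hsign : (∀ x ∈ Icc a b, 0 ≤ g x) ∨ (∀ x ∈ Icc a b, g x ≤ 0)) :
    δ * c ≤ |g β| := by
  have := aux_pos (fun x => -g x) a b δ β c hδ hc hβ hg.neg
    (fun x hx => by
      rw [deriv.fun_neg]
      linarith [hder x hx])
    (by rcases hsign with hs | hs
        · exact Or.inr (fun x hx => by simpa using hs x hx)
        · exact Or.inl (fun x hx => by simpa using hs x hx))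
  simpa using this

theorem stmt_2 (f : ℝ → ℂ) (a b : ℝ) (hf : ContDiff ℝ 1 f)
    (h1 : (∀ x ∈ Icc a b, 0 ≤ (f x).re) ∨ (∀ x ∈ Icc a b, (f x).re ≤ 0))
    (h2 : (∀ x ∈ Icc a b, 0 ≤ deriv (fun t => (f t).re) x) ∨
          (∀ x ∈ Icc a b, deriv (fun t => (f t).re) x ≤ 0))
    (h3 : (∀ x ∈ Icc a b, 0 ≤ (f x).im) ∨ (∀ x ∈ Icc a b, (f x).im ≤ 0))
    (h4 : (∀ x ∈ Icc a b, 0 ≤ deriv (fun t => (f t).im) x) ∨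
          (∀ x ∈ Icc a b, deriv (fun t => (f t).im) x ≤ 0))
    (h5 : (∀ x ∈ Icc a b, 0 ≤ deriv (fun t => (f t).re) x - deriv (fun t => (f t).im) x) ∨
          (∀ x ∈ Icc a b, deriv (fun t => (f t).re) x - deriv (fun t => (f t).im) x ≤ 0))
    (h6 : (∀ x ∈ Icc a b, 0 ≤ deriv (fun t => (f t).re) x + deriv (fun t => (f t).im) x) ∨
          (∀ x ∈ Icc a b, deriv (fun t => (f t).re) x + deriv (fun t => (f t).im) x ≤ 0))
    (δ : ℝ) (hδ : 0 < δ) (β : ℝ) (hβ : β ∈ Icc (a + δ) (b - δ)) :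
    ‖f β‖ ≥ (δ / Real.sqrt 2) * ⨅ α : Icc a b, ‖deriv f α‖ := by
  have hfd : Differentiable ℝ f := hf.differentiable one_ne_zero
  set m : ℝ := ⨅ α : Icc a b, ‖deriv f ↑α‖ with hm_def
  have hab : a ≤ b := by
    have := hβ.1; have := hβ.2; linarith
  have hne : Nonempty (Icc a b) := ⟨⟨a, le_refl a, hab⟩⟩
  have hm0 : 0 ≤ m := Real.iInf_nonneg (fun i => norm_nonneg _)
  have hmle : ∀ x ∈ Icc a b, m ≤ ‖deriv f x‖ := by
    intro x hx
    exact ciInf_le ⟨0, fun r ⟨i, hi⟩ => hi ▸ norm_nonneg _⟩ (⟨x, hx⟩ : Icc a b)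
  -- derivatives of real and imaginary parts
  have hdre : Differentiable ℝ (fun t => (f t).re) :=
    fun x => (Complex.reCLM.hasFDerivAt.comp_hasDerivAt x (hfd x).hasDerivAt).differentiableAt
  have hdim : Differentiable ℝ (fun t => (f t).im) :=
    fun x => (Complex.imCLM.hasFDerivAt.comp_hasDerivAt x (hfd x).hasDerivAt).differentiableAt
  have hre : ∀ x, deriv (fun t => (f t).re) x = (deriv f x).re := by
    intro x
    exact (Complex.reCLM.hasFDerivAt.comp_hasDerivAt x (hfd x).hasDerivAt).deriv
  have him : ∀ x, deriv (fun t => (f t).im) x = (deriv f x).im := by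
    intro x
    exact (Complex.imCLM.hasFDerivAt.comp_hasDerivAt x (hfd x).hasDerivAt).deriv
  have habs : ∀ x, (‖deriv f x‖) ^ 2 =
      (deriv (fun t => (f t).re) x) ^ 2 + (deriv (fun t => (f t).im) x) ^ 2 := by
    intro x
    rw [hre, him, Complex.sq_norm, Complex.normSq_apply]
    ring
  set c : ℝ := m / Real.sqrt 2 with hc_def
  have hs2 : (0:ℝ) < Real.sqrt 2 := Real.sqrt_pos.mpr (by norm_num)
  have hs2sq : Real.sqrt 2 ^ 2 = 2 := Real.sq_sqrt (by norm_num)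
  have hc0 : 0 ≤ c := div_nonneg hm0 hs2.le
  -- pointwise: if p^2 dominates then c ≤ |p|
  have key : ∀ x ∈ Icc a b, ∀ p q : ℝ,
      (‖deriv f x‖) ^ 2 = p ^ 2 + q ^ 2 → q ^ 2 ≤ p ^ 2 → c ≤ |p| := by
    intro x hx p q hpq hdom
    have h1 : m ^ 2 ≤ 2 * p ^ 2 := by
      have := hmle x hx
      nlinarith [norm_nonneg (deriv f x)]
    rw [hc_def, div_le_iff₀ hs2]
    nlinarith [abs_nonneg p, sq_abs p, hs2sq, mul_nonneg (abs_nonneg p) hs2.le,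
      sq_nonneg (|p| * Real.sqrt 2 - m), sq_nonneg (|p| * Real.sqrt 2 + m)]
  -- conclude from a bound on |Re f β| or |Im f β|
  have finish_re : δ * c ≤ |(f β).re| → ‖f β‖ ≥ (δ / Real.sqrt 2) * m := by
    intro h
    have := Complex.abs_re_le_norm (f β)
    have : δ * c ≤ ‖f β‖ := le_trans h this
    calc (δ / Real.sqrt 2) * m = δ * c := by rw [hc_def]; ring
      _ ≤ ‖f β‖ := this
  have finish_im : δ * c ≤ |(f β).im| → ‖f β‖ ≥ (δ / Real.sqrt 2) * m := by
    intro h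
    have := Complex.abs_im_le_norm (f β)
    have : δ * c ≤ ‖f β‖ := le_trans h this
    calc (δ / Real.sqrt 2) * m = δ * c := by rw [hc_def]; ring
      _ ≤ ‖f β‖ := this
  rcases h5 with h5 | h5 <;> rcases h6 with h6 | h6
  · -- u' - v' ≥ 0, u' + v' ≥ 0 : u' ≥ |v'|, u' ≥ 0
    apply finish_re
    apply aux_pos _ a b δ β c hδ hc0 hβ hdre _ h1
    intro x hx
    have h5x := h5 x hx; have h6x := h6 x hx
    have := key x hx (deriv (fun t => (f t).re) x) (deriv (fun t => (f t).im) x)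
      (habs x) (by nlinarith)
    rw [abs_of_nonneg (by linarith)] at this
    exact this
  · -- u' - v' ≥ 0, u' + v' ≤ 0 : v' ≤ -|u'|
    apply finish_im
    apply aux_neg _ a b δ β c hδ hc0 hβ hdim _ h3
    intro x hx
    have h5x := h5 x hx; have h6x := h6 x hx
    have := key x hx (deriv (fun t => (f t).im) x) (deriv (fun t => (f t).re) x)
      (by rw [habs x]; ring) (by nlinarith)
    rw [abs_of_nonpos (by linarith)] at this
    linarith
  · -- u' - v' ≤ 0, u' + v' ≥ 0 : v' ≥ |u'|
    apply finish_im
    apply aux_pos _ a b δ β c hδ hc0 hβ hdim _ h3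
    intro x hx
    have h5x := h5 x hx; have h6x := h6 x hx
    have := key x hx (deriv (fun t => (f t).im) x) (deriv (fun t => (f t).re) x)
      (by rw [habs x]; ring) (by nlinarith)
    rw [abs_of_nonneg (by linarith)] at this
    exact this
  · -- u' - v' ≤ 0, u' + v' ≤ 0 : u' ≤ -|v'|
    apply finish_re
    apply aux_neg _ a b δ β c hδ hc0 hβ hdre _ h1
    intro x hx
    have h5x := h5 x hx; have h6x := h6 x hx
    have := key x hx (deriv (fun t => (f t).re) x) (deriv (fun t => (f t).im) x)
      (habs x) (by nlinarith)
    rw [abs_of_nonpos (by linarith)] at this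
    linarith
end

section
/- Let α₁, …, α_k be real numbers and let P be any set of k + 1 prime numbers. Then there exists a prime p ∈ P such that for every integer a with 0 < |a| < p and every i ∈ [k], |a/p − α_i| > 1/(2·(max P)²). -/
theorem stmt_3 (k : ℕ) (α : Fin k → ℝ) (P : Finset ℕ)
    (hP : ∀ p ∈ P, p.Prime) (hcard : P.card = k + 1) (hne : P.Nonempty) :
    ∃ p ∈ P, ∀ a : ℤ, 0 < |a| → |a| < (p : ℤ) → ∀ i : Fin k,
      |(a : ℝ) / (p : ℝ) - α i| > 1 / (2 * ((P.max' hne : ℝ)) ^ 2) := by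
  by_contra hcon
  push_neg at hcon
  choose a ha0 hap ι hι using hcon
  have hclt : Fintype.card (Fin k) < Fintype.card {x // x ∈ P} := by
    simp [Fintype.card_coe, hcard]
  obtain ⟨⟨p, hp⟩, ⟨q, hq⟩, hxy, hfe⟩ :=
    Fintype.exists_ne_map_eq_of_card_lt (fun x : {x // x ∈ P} => ι x.1 x.2) hclt
  have hpq : p ≠ q := fun h => hxy (Subtype.ext h)
  have hp' := hP p hp
  have hq' := hP q hq
  set M := P.max' hne with hMdef
  have hMP : M ∈ P := P.max'_mem hne
  have hM' := hP M hMP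
  have hpM : p ≤ M := P.le_max' p hp
  have hqM : q ≤ M := P.le_max' q hq
  have key : a p hp * q ≠ a q hq * p := by
    intro heq
    have hpd : (p : ℤ) ∣ a p hp * q := heq ▸ dvd_mul_left _ _
    rcases ((Nat.prime_iff_prime_int.mp hp').dvd_mul.mp hpd) with h1 | h1
    · have h0 := Int.eq_zero_of_abs_lt_dvd h1 (hap p hp)
      have := ha0 p hp
      simp [h0] at this
    · have hdvd : p ∣ q := Int.ofNat_dvd.mp (by exact_mod_cast h1)
      exact hpq ((Nat.prime_dvd_prime_iff_eq hp' hq').mp hdvd)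
  have hge : (1 : ℤ) ≤ |a p hp * q - a q hq * p| :=
    Int.one_le_abs (sub_ne_zero.mpr key)
  have hppos : (0:ℝ) < p := by exact_mod_cast hp'.pos
  have hqpos : (0:ℝ) < q := by exact_mod_cast hq'.pos
  have hMpos : (0:ℝ) < M := by exact_mod_cast hM'.pos
  have hM0 : (M:ℝ) ≠ 0 := hMpos.ne'
  have hpqlt : (p:ℝ) * q < (M:ℝ)^2 := by
    have h1 : p < M ∨ q < M := by omega
    have hpM' : (p:ℝ) ≤ M := by exact_mod_cast hpM
    have hqM' : (q:ℝ) ≤ M := by exact_mod_cast hqM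
    rcases h1 with h | h
    · have h' : (p:ℝ) < M := by exact_mod_cast h
      nlinarith
    · have h' : (q:ℝ) < M := by exact_mod_cast h
      nlinarith
  have h1 := hι p hp
  have h2 := hι q hq
  rw [hfe] at h1
  have htri : |(a p hp : ℝ)/p - (a q hq : ℝ)/q| ≤ 1 / (M:ℝ)^2 := by
    calc |(a p hp : ℝ)/p - (a q hq : ℝ)/q|
        ≤ |(a p hp : ℝ)/p - α (ι q hq)| + |α (ι q hq) - (a q hq : ℝ)/q| :=
          abs_sub_le _ _ _
      _ ≤ 1/(2*(M:ℝ)^2) + 1/(2*(M:ℝ)^2) := add_le_add h1 (by rw [abs_sub_comm]; exact h2)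
      _ = 1/(M:ℝ)^2 := by field_simp; ring
  have hlow : 1 / ((p:ℝ)*q) ≤ |(a p hp : ℝ)/p - (a q hq : ℝ)/q| := by
    have heq : (a p hp : ℝ)/p - (a q hq : ℝ)/q
        = ((a p hp * q - a q hq * p : ℤ) : ℝ) / ((p:ℝ)*q) := by
      push_cast
      field_simp
    rw [heq, abs_div, abs_of_pos (by positivity : (0:ℝ) < (p:ℝ)*q)]
    have hge' : (1:ℝ) ≤ |((a p hp * q - a q hq * p : ℤ) : ℝ)| := by
      rw [← Int.cast_abs]
      exact_mod_cast hge
    gcongr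
  have hfin : 1/(M:ℝ)^2 < 1/((p:ℝ)*q) :=
    one_div_lt_one_div_of_lt (by positivity) hpqlt
  linarith
end

section
/- Let f, g, h ∈ ℂ[x] with f = g·h, and let p be a prime with p > 2·deg(f) such that g does not vanish at any primitive p-th root of unity. Then ‖h‖₂ ≤ √2 · ‖f‖₁ · max over p-th roots of unity θ ≠ 1 of 1/|g(θ)|. -/
open Polynomial

/-- The ℓ₂-norm of the coefficient vector of a polynomial over ℂ. -/
noncomputable def polyL2 (q : Polynomial ℂ) : ℝ :=
  Real.sqrt (∑ i ∈ q.support, ‖q.coeff i‖ ^ 2)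

/-- The ℓ₁-norm of the coefficient vector of a polynomial over ℂ. -/
noncomputable def polyL1 (q : Polynomial ℂ) : ℝ :=
  ∑ i ∈ q.support, ‖q.coeff i‖

private lemma abs_eq_one_of_pow {p : ℕ} (hp : p ≠ 0) {θ : ℂ} (hθ : θ ^ p = 1) :
    ‖θ‖ = 1 := by
  have h1 : ‖θ‖ ^ p = 1 := by rw [← norm_pow, hθ, norm_one]
  have h0 : 0 ≤ ‖θ‖ := norm_nonneg _
  rcases lt_trichotomy (‖θ‖) 1 with hlt | heq | hgt
  · have := pow_lt_one₀ h0 hlt hp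
    linarith
  · exact heq
  · have := one_lt_pow₀ hgt hp
    linarith

private lemma orth {p : ℕ} {ζ : ℂ} (hζ : IsPrimitiveRoot ζ p) {a b : ℕ}
    (ha : a < p) (hb : b < p) :
    ∑ j ∈ Finset.range p, (ζ ^ a * (ζ ^ b)⁻¹) ^ j = if a = b then (p : ℂ) else 0 := by
  have hζ0 : ζ ≠ 0 := by
    intro h0
    have h1 := hζ.pow_eq_one
    rw [h0, zero_pow (by omega : p ≠ 0)] at h1
    exact one_ne_zero h1.symm
  by_cases hab : a = b
  · subst hab
    simp [mul_inv_cancel₀ (pow_ne_zero a hζ0)]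
  · rw [if_neg hab]
    have hw1 : ζ ^ a * (ζ ^ b)⁻¹ ≠ 1 := by
      intro hw
      exact hab (hζ.pow_inj ha hb ((mul_inv_eq_one₀ (pow_ne_zero b hζ0)).mp hw))
    have hwp : (ζ ^ a * (ζ ^ b)⁻¹) ^ p = 1 := by
      rw [mul_pow, inv_pow, ← pow_mul, ← pow_mul, mul_comm a p, mul_comm b p,
        pow_mul, pow_mul, hζ.pow_eq_one, one_pow, one_pow, inv_one, mul_one]
    rw [geom_sum_eq hw1, hwp, sub_self, zero_div]

private lemma parseval {p : ℕ} (hp : 0 < p) {ζ : ℂ} (hζ : IsPrimitiveRoot ζ p)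
    (q : Polynomial ℂ) (hq : q.natDegree < p) :
    ∑ j ∈ Finset.range p, Complex.normSq (q.eval (ζ ^ j)) =
      (p : ℝ) * ∑ i ∈ Finset.range p, Complex.normSq (q.coeff i) := by
  have hζ0 : ζ ≠ 0 := by
    intro h0
    have h1 := hζ.pow_eq_one
    rw [h0, zero_pow hp.ne'] at h1
    exact one_ne_zero h1.symm
  have habs : ‖ζ‖ = 1 := abs_eq_one_of_pow hp.ne' hζ.pow_eq_one
  have hnorm : Complex.normSq ζ = 1 := by rw [← Complex.sq_norm, habs, one_pow]
  have hmc : ζ * (starRingEnd ℂ) ζ = 1 := by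
    rw [Complex.mul_conj, hnorm, Complex.ofReal_one]
  have hconj : (starRingEnd ℂ) ζ = ζ⁻¹ := eq_inv_of_mul_eq_one_right hmc
  have key : ∑ j ∈ Finset.range p, (q.eval (ζ ^ j) * (starRingEnd ℂ) (q.eval (ζ ^ j))) =
      (p : ℂ) * ∑ i ∈ Finset.range p, (q.coeff i * (starRingEnd ℂ) (q.coeff i)) := by
    have heval : ∀ j : ℕ, q.eval (ζ ^ j) = ∑ i ∈ Finset.range p, q.coeff i * (ζ ^ j) ^ i :=
      fun j => eval_eq_sum_range' hq _
    calc ∑ j ∈ Finset.range p, (q.eval (ζ ^ j) * (starRingEnd ℂ) (q.eval (ζ ^ j)))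
        = ∑ j ∈ Finset.range p, ∑ a ∈ Finset.range p, ∑ b ∈ Finset.range p,
            q.coeff a * (starRingEnd ℂ) (q.coeff b) * (ζ ^ a * (ζ ^ b)⁻¹) ^ j := by
          refine Finset.sum_congr rfl fun j _ => ?_
          rw [heval j, map_sum, Finset.sum_mul_sum]
          refine Finset.sum_congr rfl fun a _ => Finset.sum_congr rfl fun b _ => ?_
          rw [map_mul, map_pow, map_pow, hconj]
          rw [mul_pow, ← pow_mul, ← pow_mul, mul_comm j a, mul_comm j b,
            pow_mul, pow_mul, inv_pow]
          ring
      _ = ∑ a ∈ Finset.range p, ∑ b ∈ Finset.range p,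
            q.coeff a * (starRingEnd ℂ) (q.coeff b) *
              ∑ j ∈ Finset.range p, (ζ ^ a * (ζ ^ b)⁻¹) ^ j := by
          rw [Finset.sum_comm]
          refine Finset.sum_congr rfl fun a _ => ?_
          rw [Finset.sum_comm]
          exact Finset.sum_congr rfl fun b _ => (Finset.mul_sum _ _ _).symm
      _ = ∑ a ∈ Finset.range p, q.coeff a * (starRingEnd ℂ) (q.coeff a) * (p : ℂ) := by
          refine Finset.sum_congr rfl fun a ha => ?_
          have : ∑ b ∈ Finset.range p,
              q.coeff a * (starRingEnd ℂ) (q.coeff b) *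
                ∑ j ∈ Finset.range p, (ζ ^ a * (ζ ^ b)⁻¹) ^ j =
              ∑ b ∈ Finset.range p,
                if a = b then q.coeff a * (starRingEnd ℂ) (q.coeff b) * (p : ℂ) else 0 := by
            refine Finset.sum_congr rfl fun b hb => ?_
            rw [orth hζ (Finset.mem_range.mp ha) (Finset.mem_range.mp hb)]
            split <;> simp
          rw [this, Finset.sum_ite_eq, if_pos ha]
      _ = (p : ℂ) * ∑ i ∈ Finset.range p, (q.coeff i * (starRingEnd ℂ) (q.coeff i)) := by
          rw [Finset.mul_sum]
          exact Finset.sum_congr rfl fun i _ => by ring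
  simp only [Complex.mul_conj] at key
  exact_mod_cast key

theorem stmt_6 (f g h : Polynomial ℂ) (hfgh : f = g * h)
    (p : ℕ) (hp : p.Prime) (hpf : 2 * f.natDegree < p)
    (hg : ∀ θ : ℂ, IsPrimitiveRoot θ p → g.eval θ ≠ 0) :
    polyL2 h ≤ Real.sqrt 2 * polyL1 f *
      sSup ((fun θ : ℂ => ‖g.eval θ‖⁻¹) ''
        {θ : ℂ | θ ^ p = 1 ∧ θ ≠ 1}) := by
  classical
  have hp0 : p ≠ 0 := hp.pos.ne'
  have hp2 : 2 ≤ p := hp.two_le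
  set ζ : ℂ := Complex.exp (2 * Real.pi * Complex.I / p) with hζdef
  have hζ : IsPrimitiveRoot ζ p := Complex.isPrimitiveRoot_exp p hp0
  set M : ℝ := sSup ((fun θ : ℂ => (‖g.eval θ‖)⁻¹) ''
      {θ : ℂ | θ ^ p = 1 ∧ θ ≠ 1}) with hMdef
  -- primitivity of nontrivial p-th roots
  have hprim : ∀ θ : ℂ, θ ^ p = 1 → θ ≠ 1 → IsPrimitiveRoot θ p := by
    intro θ h1 hne
    have hdvd : orderOf θ ∣ p := orderOf_dvd_of_pow_eq_one h1
    rcases hp.eq_one_or_self_of_dvd _ hdvd with he | he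
    · exact absurd (orderOf_eq_one_iff.mp he) hne
    · have := IsPrimitiveRoot.orderOf θ
      rwa [he] at this
  -- finiteness / boundedness of the sup set
  have hfin : ({θ : ℂ | θ ^ p = 1 ∧ θ ≠ 1}).Finite := by
    apply Set.Finite.subset (Polynomial.nthRoots p (1 : ℂ)).toFinset.finite_toSet
    intro x hx
    simp only [Finset.coe_sort_coe, Multiset.mem_toFinset, Finset.mem_coe,
      Polynomial.mem_nthRoots hp.pos]
    exact hx.1
  have hbdd : BddAbove ((fun θ : ℂ => (‖g.eval θ‖)⁻¹) ''
      {θ : ℂ | θ ^ p = 1 ∧ θ ≠ 1}) := (hfin.image _).bddAbove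
  have hζne1 : ζ ≠ 1 := hζ.ne_one (by omega)
  have hMmem : ∀ θ : ℂ, θ ^ p = 1 → θ ≠ 1 → (‖g.eval θ‖)⁻¹ ≤ M :=
    fun θ h1 h2 => le_csSup hbdd ⟨θ, ⟨h1, h2⟩, rfl⟩
  have hM0 : 0 ≤ M :=
    le_trans (by positivity) (hMmem ζ hζ.pow_eq_one hζne1)
  have hL1 : 0 ≤ polyL1 f := Finset.sum_nonneg fun i _ => by positivity
  -- |f(θ)| ≤ ‖f‖₁ on the unit circle
  have habsf : ∀ θ : ℂ, ‖θ‖ = 1 → ‖f.eval θ‖ ≤ polyL1 f := by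
    intro θ hθ
    rw [Polynomial.eval_eq_sum, Polynomial.sum_def]
    refine le_trans (norm_sum_le _ _) (le_of_eq ?_)
    refine Finset.sum_congr rfl fun i _ => ?_
    rw [norm_mul, norm_pow, hθ, one_pow, mul_one]
  -- degrees
  have hg0 : g ≠ 0 := by
    intro h0
    exact hg ζ hζ (by simp [h0])
  have hdh : h.natDegree ≤ f.natDegree := by
    by_cases hh0 : h = 0
    · simp [hh0]
    · rw [hfgh, Polynomial.natDegree_mul hg0 hh0]
      omega
  have hdhp : h.natDegree < p := by omega
  -- L2 in terms of normSq over range p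
  set L : ℝ := ∑ i ∈ Finset.range p, Complex.normSq (h.coeff i) with hLdef
  have hL0 : 0 ≤ L := Finset.sum_nonneg fun i _ => Complex.normSq_nonneg _
  have hL2sq : polyL2 h ^ 2 = L := by
    unfold polyL2
    rw [Real.sq_sqrt (Finset.sum_nonneg fun i _ => by positivity)]
    rw [Finset.sum_subset (Polynomial.supp_subset_range hdhp)
      (fun i _ hi => by rw [Polynomial.notMem_support_iff.mp hi]; simp)]
    exact Finset.sum_congr rfl fun i _ => Complex.sq_norm _
  -- Parseval
  have hpar := parseval hp.pos hζ h hdhp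
  -- bound at θ = 1
  set d := h.natDegree with hddef
  have h1bound : Complex.normSq (h.eval 1) ≤ ((d : ℝ) + 1) * L := by
    have he : h.eval 1 = ∑ i ∈ Finset.range (d + 1), h.coeff i := by
      rw [Polynomial.eval_eq_sum_range]
      simp
      rfl
    have h1 : ‖h.eval 1‖ ≤ ∑ i ∈ Finset.range (d + 1), ‖h.coeff i‖ := by
      rw [he]
      exact norm_sum_le _ _
    have h2 : (∑ i ∈ Finset.range (d + 1), ‖h.coeff i‖) ^ 2 ≤
        ((d : ℝ) + 1) * ∑ i ∈ Finset.range (d + 1), ‖h.coeff i‖ ^ 2 := by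
      have := sq_sum_le_card_mul_sum_sq (s := Finset.range (d + 1))
        (f := fun i => ‖h.coeff i‖)
      simpa using this
    have h3 : ∑ i ∈ Finset.range (d + 1), ‖h.coeff i‖ ^ 2 ≤ L := by
      rw [hLdef]
      have hsub : Finset.range (d + 1) ⊆ Finset.range p := Finset.range_subset_range.mpr (by omega)
      calc ∑ i ∈ Finset.range (d + 1), ‖h.coeff i‖ ^ 2
          = ∑ i ∈ Finset.range (d + 1), Complex.normSq (h.coeff i) :=
            Finset.sum_congr rfl fun i _ => Complex.sq_norm _
        _ ≤ ∑ i ∈ Finset.range p, Complex.normSq (h.coeff i) :=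
            Finset.sum_le_sum_of_subset_of_nonneg hsub
              (fun i _ _ => Complex.normSq_nonneg _)
    have h4 : ‖h.eval 1‖ ^ 2 ≤
        (∑ i ∈ Finset.range (d + 1), ‖h.coeff i‖) ^ 2 :=
      pow_le_pow_left₀ (norm_nonneg _) h1 2
    have h5 : ((d : ℝ) + 1) * ∑ i ∈ Finset.range (d + 1), ‖h.coeff i‖ ^ 2 ≤
        ((d : ℝ) + 1) * L := by
      apply mul_le_mul_of_nonneg_left h3
      positivity
    calc Complex.normSq (h.eval 1) = ‖h.eval 1‖ ^ 2 := (Complex.sq_norm _).symm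
      _ ≤ _ := h4
      _ ≤ _ := h2
      _ ≤ _ := h5
  -- bound at nontrivial roots
  have hterm : ∀ j ∈ (Finset.range p).erase 0,
      Complex.normSq (h.eval (ζ ^ j)) ≤ (polyL1 f * M) ^ 2 := by
    intro j hj
    obtain ⟨hj0, hjp⟩ := Finset.mem_erase.mp hj
    have hjp' := Finset.mem_range.mp hjp
    have hθ1 : (ζ ^ j) ^ p = 1 := by
      rw [← pow_mul, mul_comm, pow_mul, hζ.pow_eq_one, one_pow]
    have hθne : ζ ^ j ≠ 1 := hζ.pow_ne_one_of_pos_of_lt hj0 hjp'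
    have hgθ : g.eval (ζ ^ j) ≠ 0 := hg _ (hprim _ hθ1 hθne)
    have habsθ : ‖ζ ^ j‖ = 1 := abs_eq_one_of_pow hp0 hθ1
    have heq : h.eval (ζ ^ j) = f.eval (ζ ^ j) / g.eval (ζ ^ j) := by
      rw [hfgh, Polynomial.eval_mul]
      field_simp
    have hle : ‖h.eval (ζ ^ j)‖ ≤ polyL1 f * M := by
      rw [heq, norm_div, div_eq_mul_inv]
      exact mul_le_mul (habsf _ habsθ) (hMmem _ hθ1 hθne) (by positivity) hL1
    calc Complex.normSq (h.eval (ζ ^ j)) = ‖h.eval (ζ ^ j)‖ ^ 2 :=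
          (Complex.sq_norm _).symm
      _ ≤ (polyL1 f * M) ^ 2 := pow_le_pow_left₀ (norm_nonneg _) hle 2
  -- assemble
  have hsplit : Complex.normSq (h.eval (ζ ^ 0)) +
      ∑ j ∈ (Finset.range p).erase 0, Complex.normSq (h.eval (ζ ^ j)) =
      ∑ j ∈ Finset.range p, Complex.normSq (h.eval (ζ ^ j)) :=
    Finset.add_sum_erase _ (fun j => Complex.normSq (h.eval (ζ ^ j))) (Finset.mem_range.mpr hp.pos)
  have hsum2 : ∑ j ∈ (Finset.range p).erase 0, Complex.normSq (h.eval (ζ ^ j)) ≤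
      ((p : ℝ) - 1) * (polyL1 f * M) ^ 2 := by
    calc ∑ j ∈ (Finset.range p).erase 0, Complex.normSq (h.eval (ζ ^ j))
        ≤ ∑ _j ∈ (Finset.range p).erase 0, (polyL1 f * M) ^ 2 := Finset.sum_le_sum hterm
      _ = (((Finset.range p).erase 0).card : ℝ) * (polyL1 f * M) ^ 2 := by
          rw [Finset.sum_const, nsmul_eq_mul]
      _ = ((p : ℝ) - 1) * (polyL1 f * M) ^ 2 := by
          rw [Finset.card_erase_of_mem (Finset.mem_range.mpr hp.pos), Finset.card_range]
          congr 1
          push_cast [Nat.cast_sub hp.pos]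
          ring
  have hmain : (p : ℝ) * L ≤ ((d : ℝ) + 1) * L + ((p : ℝ) - 1) * (polyL1 f * M) ^ 2 := by
    rw [← hpar, ← hsplit, pow_zero]
    linarith [h1bound, hsum2]
  have hdp : (2 : ℝ) * ((d : ℝ) + 1) ≤ (p : ℝ) + 1 := by
    have : 2 * d + 2 ≤ p + 1 := by omega
    exact_mod_cast this
  have hp2' : (2 : ℝ) ≤ (p : ℝ) := by exact_mod_cast hp2
  have hK0 : 0 ≤ (polyL1 f * M) ^ 2 := sq_nonneg _
  have h6 : (2 : ℝ) * ((d : ℝ) + 1) * L ≤ ((p : ℝ) + 1) * L :=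
    mul_le_mul_of_nonneg_right hdp hL0
  have hfinal : L ≤ 2 * (polyL1 f * M) ^ 2 := by
    nlinarith [hmain, h6, hK0, hL0, hp2']
  have hstep : polyL2 h ≤ Real.sqrt (2 * (polyL1 f * M) ^ 2) := by
    have hnn : 0 ≤ polyL2 h := Real.sqrt_nonneg _
    calc polyL2 h = Real.sqrt (polyL2 h ^ 2) := (Real.sqrt_sq hnn).symm
      _ ≤ Real.sqrt (2 * (polyL1 f * M) ^ 2) := Real.sqrt_le_sqrt (by rw [hL2sq]; exact hfinal)
  rw [Real.sqrt_mul (by norm_num), Real.sqrt_sq (by positivity)] at hstep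
  calc polyL2 h ≤ Real.sqrt 2 * (polyL1 f * M) := hstep
    _ = Real.sqrt 2 * polyL1 f * M := by ring
end

section
/- Let g = Σ_{i=1}^{s} cᵢ x^{nᵢ} with n₁ < … < n_s, all cᵢ ≠ 0, and s ≥ 2. Then max{d(g), d(g_rev)} ≥ (n_s − n₁ − 1)^{s/2}. -/
open Polynomial

/-- `d(g) = ∏_{i=1}^{s-1} (n_s - n_i)` over the sorted nonzero exponents of `g`. -/
noncomputable def polyD (g : Polynomial ℂ) : ℕ :=
  ∏ n ∈ g.support.erase g.natDegree, (g.natDegree - n)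

/-- `d(g_rev) = ∏_{i=2}^{s} (n_i - n₁)` over the sorted nonzero exponents of `g`. -/
noncomputable def polyDrev (g : Polynomial ℂ) : ℕ :=
  ∏ n ∈ g.support.erase g.natTrailingDegree, (n - g.natTrailingDegree)

theorem stmt_11 (g : Polynomial ℂ) (hg : g ≠ 0) (hs : 2 ≤ g.support.card) :
    ((max (polyD g) (polyDrev g) : ℕ) : ℝ) ≥
      ((g.natDegree : ℝ) - g.natTrailingDegree - 1) ^ ((g.support.card : ℝ) / 2) := by
  set S := g.support with hS
  set N := g.natDegree with hN
  set m := g.natTrailingDegree with hm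
  set s := S.card with hscard
  have hNS : N ∈ S := natDegree_mem_support_of_nonzero hg
  have hmS : m ∈ S := natTrailingDegree_mem_support_of_nonzero hg
  have hmle : ∀ n ∈ S, m ≤ n := fun n hn => natTrailingDegree_le_of_mem_supp n hn
  have hleN : ∀ n ∈ S, n ≤ N := fun n hn => le_natDegree_of_mem_supp n hn
  have hmN : m < N := by
    rcases lt_or_eq_of_le (hmle N hNS) with h | h
    · exact h
    · exfalso
      have h1 : S.card ≤ 1 := Finset.card_le_one.mpr (fun a ha b hb => by
        have := hmle a ha; have := hleN a ha
        have := hmle b hb; have := hleN b hb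
        omega)
      omega
  set T : Finset ℕ := (S.erase N).erase m with hT
  have hmT : m ∉ T := Finset.notMem_erase _ _
  have hNT : N ∉ T := fun h => Finset.notMem_erase _ _ (Finset.mem_of_mem_erase h)
  have hmem : ∀ n ∈ T, m < n ∧ n < N := by
    intro n hn
    have hn1 : n ≠ m := Finset.ne_of_mem_erase hn
    have hn2 : n ≠ N := Finset.ne_of_mem_erase (Finset.mem_of_mem_erase hn)
    have hnS : n ∈ S := Finset.mem_of_mem_erase (Finset.mem_of_mem_erase hn)
    have := hmle n hnS; have := hleN n hnS
    omega
  have hcardT : T.card = s - 2 := by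
    rw [hT, Finset.card_erase_of_mem (Finset.mem_erase.mpr ⟨hmN.ne, hmS⟩),
      Finset.card_erase_of_mem hNS]
    omega
  -- rewrite d as (N - m) * ∏ over T
  have hd : polyD g = (N - m) * ∏ n ∈ T, (N - n) := by
    rw [polyD, ← hS, ← hN]
    rw [show S.erase N = insert m T by
      rw [hT, Finset.insert_erase (Finset.mem_erase.mpr ⟨hmN.ne, hmS⟩)]]
    rw [Finset.prod_insert hmT]
  have hdrev : polyDrev g = (N - m) * ∏ n ∈ T, (n - m) := by
    rw [polyDrev, ← hS, ← hm]
    rw [show S.erase m = insert N T by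
      rw [hT, Finset.erase_right_comm,
        Finset.insert_erase (Finset.mem_erase.mpr ⟨hmN.ne', hNS⟩)]]
    rw [Finset.prod_insert hNT]
  -- key inequality in ℕ
  have hkey : (N - m - 1) ^ s ≤ polyD g * polyDrev g := by
    have hprod : (N - m - 1) ^ T.card ≤ ∏ n ∈ T, (N - n) * (n - m) := by
      rw [← Finset.prod_const]
      apply Finset.prod_le_prod'
      intro n hn
      obtain ⟨h1, h2⟩ := hmem n hn
      obtain ⟨a, ha⟩ := Nat.exists_eq_add_of_le (show 1 ≤ N - n by omega)
      obtain ⟨c, hc⟩ := Nat.exists_eq_add_of_le (show 1 ≤ n - m by omega)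
      have : N - m - 1 = a + c + 1 := by omega
      rw [this, ha, hc]
      ring_nf
      nlinarith [Nat.zero_le (a * c)]
    calc (N - m - 1) ^ s = (N - m - 1) ^ 2 * (N - m - 1) ^ (s - 2) := by
          rw [← pow_add]; congr 1; omega
      _ ≤ (N - m) ^ 2 * ∏ n ∈ T, (N - n) * (n - m) := by
          apply Nat.mul_le_mul
          · exact Nat.pow_le_pow_left (by omega) 2
          · rw [← hcardT]; exact hprod
      _ = polyD g * polyDrev g := by
          rw [hd, hdrev, Finset.prod_mul_distrib]; ring
  -- pass to ℝ
  set M := max (polyD g) (polyDrev g) with hM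
  have hle2 : (N - m - 1) ^ s ≤ M ^ 2 := by
    calc (N - m - 1) ^ s ≤ polyD g * polyDrev g := hkey
      _ ≤ M * M := Nat.mul_le_mul (le_max_left _ _) (le_max_right _ _)
      _ = M ^ 2 := (sq M).symm
  have hb : ((N : ℝ) - m - 1) = ((N - m - 1 : ℕ) : ℝ) := by
    rw [Nat.cast_sub (show 1 ≤ N - m by omega), Nat.cast_sub hmN.le, Nat.cast_one]
  rw [hb]
  set b : ℕ := N - m - 1 with hbdef
  have hb0 : (0:ℝ) ≤ (b:ℝ) := Nat.cast_nonneg _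
  have : ((b:ℝ)) ^ ((s : ℝ) / 2) = Real.sqrt ((b:ℝ) ^ s) := by
    rw [Real.sqrt_eq_rpow, ← Real.rpow_natCast (b:ℝ) s, ← Real.rpow_mul hb0]
    ring_nf
  rw [ge_iff_le, this]
  have hM0 : (0:ℝ) ≤ (M:ℝ) := Nat.cast_nonneg _
  calc Real.sqrt ((b:ℝ) ^ s) ≤ Real.sqrt ((M:ℝ) ^ 2) := by
        apply Real.sqrt_le_sqrt
        have := hle2
        exact_mod_cast this
    _ = (M:ℝ) := Real.sqrt_sq hM0
end

section
/- Let g = Σ_{i=1}^{s} cᵢ x^{nᵢ} with n₁ < … < n_s, all cᵢ ≠ 0, and n_s − n₁ > 1. Then max{d(g), d(g_rev)} ≥ (s/(2e))^{s/2 − 1} · ((n_s − n₁)/e)^{s/2}. -/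
open Polynomial Real

section Aux
open Finset Nat

lemma prod_ge_factorial (R : Finset ℕ) (h0 : 0 ∉ R) : R.card ! ≤ ∏ x ∈ R, x := by
  induction R using Finset.strongInduction with
  | _ R ih =>
    rcases R.eq_empty_or_nonempty with rfl | hne
    · simp
    · have hMem : R.max' hne ∈ R := R.max'_mem hne
      have hcard : R.card ≤ R.max' hne := by
        have hsub : R ⊆ Finset.Icc 1 (R.max' hne) := fun x hx =>
          Finset.mem_Icc.mpr ⟨Nat.one_le_iff_ne_zero.mpr (by rintro rfl; exact h0 hx),
            R.le_max' x hx⟩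
        calc R.card ≤ (Finset.Icc 1 (R.max' hne)).card := Finset.card_le_card hsub
          _ = R.max' hne := by simp
      have ih' := ih _ (Finset.erase_ssubset hMem)
        (fun h => h0 (Finset.mem_of_mem_erase h))
      have hpe : ∏ x ∈ R, x = R.max' hne * ∏ x ∈ R.erase (R.max' hne), x :=
        (Finset.mul_prod_erase R id hMem).symm
      have hcpos : 0 < R.card := Finset.card_pos.mpr hne
      have hc : R.card = (R.erase (R.max' hne)).card + 1 := by
        rw [Finset.card_erase_of_mem hMem]; omega
      rw [hpe, hc, Nat.factorial_succ]
      exact Nat.mul_le_mul (by omega) ih'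

lemma succ_pow_le (n : ℕ) : ((n : ℝ) + 1) ^ n ≤ Real.exp 1 * (n : ℝ) ^ n := by
  rcases Nat.eq_zero_or_pos n with rfl | hn
  · simpa using Real.one_le_exp (by norm_num)
  · have hn' : (0:ℝ) < n := by positivity
    have h1 : (n : ℝ) + 1 = (n : ℝ) * (1 + 1 / n) := by field_simp
    have h2 : (1 + 1 / (n:ℝ)) ^ n ≤ Real.exp 1 := by
      have := Real.add_one_le_exp (1 / (n:ℝ))
      calc (1 + 1 / (n:ℝ)) ^ n ≤ Real.exp (1 / n) ^ n := by
            apply pow_le_pow_left₀ (by positivity) (by linarith)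
        _ = Real.exp (n * (1/n)) := by rw [← Real.exp_nat_mul]
        _ = Real.exp 1 := by rw [mul_one_div, div_self (ne_of_gt hn')]
    calc ((n : ℝ) + 1) ^ n = (n:ℝ)^n * (1 + 1/(n:ℝ))^n := by rw [h1, mul_pow]
      _ ≤ (n:ℝ)^n * Real.exp 1 := by
          apply mul_le_mul_of_nonneg_left h2 (by positivity)
      _ = Real.exp 1 * (n:ℝ)^n := mul_comm _ _

lemma fact_exp_ge (m : ℕ) : (m : ℝ) ^ m ≤ (m ! : ℝ) * Real.exp 1 ^ m := by
  induction m with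
  | zero => simp
  | succ n ih =>
    have h1 : ((n:ℝ) + 1) ^ n ≤ Real.exp 1 * (n:ℝ)^n := succ_pow_le n
    have he : (0:ℝ) < Real.exp 1 := Real.exp_pos 1
    have hnn : (0:ℝ) ≤ (n:ℝ) + 1 := by positivity
    calc ((n+1 : ℕ) : ℝ) ^ (n+1) = ((n:ℝ)+1) * ((n:ℝ)+1)^n := by push_cast; ring
      _ ≤ ((n:ℝ)+1) * (Real.exp 1 * (n:ℝ)^n) := by
          apply mul_le_mul_of_nonneg_left h1 hnn
      _ ≤ ((n:ℝ)+1) * (Real.exp 1 * ((n ! : ℝ) * Real.exp 1 ^ n)) := by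
          apply mul_le_mul_of_nonneg_left _ hnn
          apply mul_le_mul_of_nonneg_left ih he.le
      _ = ((n+1)! : ℝ) * Real.exp 1 ^ (n+1) := by
          push_cast [Nat.factorial_succ]; ring



lemma two_le_exp : (2:ℝ) ≤ Real.exp 1 := by
  have := Real.exp_one_gt_d9; nlinarith

lemma even_core (m : ℕ) : ((2*m+2 : ℕ) : ℝ)^(2*m) ≤ ((m ! : ℕ):ℝ)^2 * Real.exp 1 ^ (4*m+2) := by
  set e := Real.exp 1 with he
  have hepos : (0:ℝ) < e := Real.exp_pos 1
  have h2e : (2:ℝ) ≤ e := two_le_exp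
  have h1 : ((2*m+2 : ℕ) : ℝ)^m ≤ (m ! : ℝ) * e^(2*m+1) := by
    calc ((2*m+2 : ℕ) : ℝ)^m = 2^m * ((m:ℝ)+1)^m := by
          push_cast; rw [← mul_pow]; ring_nf
      _ ≤ 2^m * (e * (m:ℝ)^m) := by
          apply mul_le_mul_of_nonneg_left (succ_pow_le m) (by positivity)
      _ ≤ 2^m * (e * ((m ! : ℝ) * e^m)) := by
          apply mul_le_mul_of_nonneg_left _ (by positivity)
          exact mul_le_mul_of_nonneg_left (fact_exp_ge m) hepos.le
      _ ≤ e^m * (e * ((m ! : ℝ) * e^m)) := by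
          apply mul_le_mul_of_nonneg_right (pow_le_pow_left₀ (by norm_num) h2e m)
          positivity
      _ = (m ! : ℝ) * e^(2*m+1) := by ring
  have hnn : (0:ℝ) ≤ ((2*m+2 : ℕ) : ℝ)^m := by positivity
  calc ((2*m+2 : ℕ) : ℝ)^(2*m) = (((2*m+2 : ℕ) : ℝ)^m)^2 := by
        rw [← pow_mul]; ring_nf
    _ ≤ ((m ! : ℝ) * e^(2*m+1))^2 := by
        apply pow_le_pow_left₀ hnn h1
    _ = ((m ! : ℕ):ℝ)^2 * e ^ (4*m+2) := by push_cast; ring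

lemma h3_ineq (m : ℕ) (hm : 1 ≤ m) : ((2*m+3 : ℕ) : ℝ) * 4^m ≤ Real.exp 1 ^ (2*m+1) := by
  set e := Real.exp 1 with he
  have hd9 := Real.exp_one_gt_d9
  induction m with
  | zero => omega
  | succ n ih =>
    rcases Nat.eq_zero_or_pos n with rfl | hn
    · push_cast
      have : (20:ℝ) ≤ e^3 := by
        have : (2.7182818283:ℝ)^3 ≤ e^3 := by
          apply pow_le_pow_left₀ (by norm_num) hd9.le
        nlinarith
      norm_num
      linarith
    · have ih' := ih hn
      have h7 : (7:ℝ) ≤ e^2 := by nlinarith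
      have hp4 : (0:ℝ) < 4^n := by positivity
      have key : (4:ℝ) * ((2*n+5)) ≤ 7 * ((2*n+3)) := by push_cast; nlinarith [Nat.one_le_iff_ne_zero.mp hn]
      calc ((2*(n+1)+3 : ℕ) : ℝ) * 4^(n+1) = (((2*n+3:ℕ):ℝ) * 4^n) * (4*(2*n+5)/(2*n+3)) := by
            push_cast
            field_simp
            ring
        _ ≤ e^(2*n+1) * (4*(2*n+5)/(2*n+3)) := by
            apply mul_le_mul_of_nonneg_right ih'
            positivity
        _ ≤ e^(2*n+1) * e^2 := by
            apply mul_le_mul_of_nonneg_left _ (by positivity)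
            rw [div_le_iff₀ (by positivity)]
            calc (4:ℝ)*(2*n+5) ≤ 7*(2*n+3) := key
              _ ≤ e^2 * (2*n+3) := by
                  apply mul_le_mul_of_nonneg_right h7 (by positivity)
        _ = e^(2*(n+1)+1) := by ring

lemma odd_core (m : ℕ) : ((2*m+3 : ℕ) : ℝ)^(2*m+1) ≤ ((m ! : ℕ):ℝ)^2 * Real.exp 1 ^ (4*m+4) := by
  set e := Real.exp 1 with he
  have hepos : (0:ℝ) < e := Real.exp_pos 1
  rcases Nat.eq_zero_or_pos m with rfl | hm
  · have h2 : (2:ℝ) ≤ e := two_le_exp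
    have : (16:ℝ) ≤ e^4 := by
      have h16 : (2:ℝ)^4 ≤ e^4 := pow_le_pow_left₀ (by norm_num) h2 4
      norm_num at h16; linarith
    norm_num
    linarith
  · have hm' : (0:ℝ) < m := by exact_mod_cast hm
    have h4 : (1 + 3/(2*(m:ℝ)))^(2*m) ≤ e^3 := by
      have ha : (1 + 3/(2*(m:ℝ))) ≤ Real.exp (3/(2*m)) := by
        have := Real.add_one_le_exp (3/(2*(m:ℝ))); linarith
      calc (1 + 3/(2*(m:ℝ)))^(2*m) ≤ Real.exp (3/(2*(m:ℝ)))^(2*m) := by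
            apply pow_le_pow_left₀ (by positivity) ha
        _ = Real.exp (((2*m : ℕ) : ℝ) * (3/(2*(m:ℝ)))) := by
            rw [← Real.exp_nat_mul]
        _ = e^3 := by
            rw [show (((2*m : ℕ) : ℝ)) * (3/(2*(m:ℝ))) = 3 by push_cast; field_simp]
            rw [he, Real.exp_one_pow]; norm_num
    have hsplit : ((2*m+3 : ℕ) : ℝ) = (2*(m:ℝ)) * (1 + 3/(2*(m:ℝ))) := by
      push_cast; field_simp
    have h5 : ((2*m+3 : ℕ) : ℝ)^(2*m) ≤ 4^m * (m:ℝ)^(2*m) * e^3 := by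
      calc ((2*m+3 : ℕ) : ℝ)^(2*m) = (2*(m:ℝ))^(2*m) * (1 + 3/(2*(m:ℝ)))^(2*m) := by
            rw [hsplit, mul_pow]
        _ ≤ (2*(m:ℝ))^(2*m) * e^3 := by
            apply mul_le_mul_of_nonneg_left h4 (by positivity)
        _ = 4^m * (m:ℝ)^(2*m) * e^3 := by
            rw [mul_pow]
            congr 2
            rw [show (2:ℝ)^(2*m) = ((2:ℝ)^2)^m by rw [← pow_mul]]
            norm_num
    have h3 := h3_ineq m hm
    have hfe := fact_exp_ge m
    have hmn : (0:ℝ) ≤ (m:ℝ)^(2*m) := by positivity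
    calc ((2*m+3 : ℕ) : ℝ)^(2*m+1) = ((2*m+3 : ℕ) : ℝ) * ((2*m+3 : ℕ) : ℝ)^(2*m) := by ring
      _ ≤ ((2*m+3 : ℕ) : ℝ) * (4^m * (m:ℝ)^(2*m) * e^3) := by
          apply mul_le_mul_of_nonneg_left h5 (by positivity)
      _ = (((2*m+3 : ℕ) : ℝ) * 4^m) * ((m:ℝ)^(2*m) * e^3) := by ring
      _ ≤ e^(2*m+1) * ((m:ℝ)^(2*m) * e^3) := by
          apply mul_le_mul_of_nonneg_right h3 (by positivity)
      _ = (m:ℝ)^(2*m) * e^(2*m+4) := by ring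
      _ = ((m:ℝ)^m)^2 * e^(2*m+4) := by rw [← pow_mul]; ring_nf
      _ ≤ ((m ! : ℝ) * e^m)^2 * e^(2*m+4) := by
          apply mul_le_mul_of_nonneg_right _ (by positivity)
          apply pow_le_pow_left₀ (by positivity) hfe
      _ = ((m ! : ℕ):ℝ)^2 * e ^ (4*m+4) := by push_cast; ring

lemma core (s : ℕ) (hs : 2 ≤ s) :
    ((s : ℕ) : ℝ)^(s-2) ≤ ((((s-2)/2)! : ℕ):ℝ)^2 * Real.exp 1 ^ (2*s-2) := by
  obtain ⟨k, hk⟩ : ∃ k, k = (s-2)/2 := ⟨_, rfl⟩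
  have hcase : s = 2*k+2 ∨ s = 2*k+3 := by omega
  rcases hcase with h | h <;> subst h
  · have h2 : 2*k/2 = k := by omega
    have h3 : 2*(2*k+2)-2 = 4*k+2 := by omega
    rw [show 2*k+2-2 = 2*k from by omega, h2, h3]; exact even_core k
  · have h2 : (2*k+1)/2 = k := by omega
    have h3 : 2*(2*k+3)-2 = 4*k+4 := by omega
    rw [show 2*k+3-2 = 2*k+1 from by omega, h2, h3]; exact odd_core k



lemma split_fact (t t1 t2 : ℕ) (h : t1 + t2 = t) : (t/2)! * (t/2)! ≤ t1 ! * t2 ! := by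
  have h1 : t1 ≤ t := by omega
  have hk : t/2 ≤ t - t/2 := by omega
  have e1 : t.choose t1 * t1 ! * t2 ! = t ! := by
    have := Nat.choose_mul_factorial_mul_factorial h1
    rwa [show t - t1 = t2 from by omega] at this
  have e2 : t.choose (t/2) * (t/2)! * (t - t/2)! = t ! := by
    exact Nat.choose_mul_factorial_mul_factorial (by omega)
  have hle : t.choose t1 ≤ t.choose (t/2) := Nat.choose_le_middle t1 t
  have hcpos : 0 < t.choose (t/2) := Nat.choose_pos (by omega)
  have key : t.choose (t/2) * ((t/2)! * (t - t/2)!) ≤ t.choose (t/2) * (t1 ! * t2 !) := by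
    calc t.choose (t/2) * ((t/2)! * (t - t/2)!) = t ! := by rw [← e2]; ring
      _ = t.choose t1 * (t1 ! * t2 !) := by rw [← e1]; ring
      _ ≤ t.choose (t/2) * (t1 ! * t2 !) := Nat.mul_le_mul_right _ hle
  have h2 : (t/2)! * (t - t/2)! ≤ t1 ! * t2 ! := Nat.le_of_mul_le_mul_left key hcpos
  calc (t/2)! * (t/2)! ≤ (t/2)! * (t - t/2)! :=
        Nat.mul_le_mul_left _ (Nat.factorial_le hk)
    _ ≤ t1 ! * t2 ! := h2

theorem stmt_12 (g : Polynomial ℂ) (hg : g ≠ 0)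
    (hgap : 1 < g.natDegree - g.natTrailingDegree) :
    ((max (polyD g) (polyDrev g) : ℕ) : ℝ) ≥
      ((g.support.card : ℝ) / (2 * Real.exp 1)) ^ ((g.support.card : ℝ) / 2 - 1) *
        (((g.natDegree : ℝ) - g.natTrailingDegree) / Real.exp 1) ^ ((g.support.card : ℝ) / 2) := by
  classical
  set S := g.support with hS
  set Md := g.natDegree with hMd
  set md := g.natTrailingDegree with hmd
  have hMS : Md ∈ S := natDegree_mem_support_of_nonzero hg
  have hmS : md ∈ S := natTrailingDegree_mem_support_of_nonzero hg
  have hub : ∀ n ∈ S, n ≤ Md := fun n hn => le_natDegree_of_mem_supp n hn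
  have hlb : ∀ n ∈ S, md ≤ n := fun n hn => natTrailingDegree_le_of_mem_supp n hn
  have hmM : md + 2 ≤ Md := by omega
  set s := S.card with hs
  set t := s - 2 with ht
  set N := Md - md with hN
  set k := t/2 with hk
  have hs2 : 2 ≤ s := by
    have hsub : ({md, Md} : Finset ℕ) ⊆ S := by
      intro x hx
      rcases Finset.mem_insert.mp hx with rfl | hx
      · exact hmS
      · rw [Finset.mem_singleton.mp hx]; exact hMS
    have hcard : ({md, Md} : Finset ℕ).card = 2 := by
      rw [Finset.card_insert_of_notMem (by simp; omega), Finset.card_singleton]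
    calc 2 = ({md, Md} : Finset ℕ).card := hcard.symm
      _ ≤ S.card := Finset.card_le_card hsub
  set T := (S.erase Md).erase md with hT
  have hmdin : md ∈ S.erase Md := Finset.mem_erase.mpr ⟨by omega, hmS⟩
  have hMdin : Md ∈ S.erase md := Finset.mem_erase.mpr ⟨by omega, hMS⟩
  have hTcard : T.card = t := by
    rw [hT, Finset.card_erase_of_mem hmdin, Finset.card_erase_of_mem hMS]
    omega
  have hTmem : ∀ n ∈ T, md < n ∧ n < Md := by
    intro n hn
    rw [hT, Finset.mem_erase, Finset.mem_erase] at hn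
    obtain ⟨h1, h2, h3⟩ := hn
    exact ⟨lt_of_le_of_ne (hlb n h3) (Ne.symm h1), lt_of_le_of_ne (hub n h3) h2⟩
  have dA : polyD g = N * ∏ n ∈ T, (Md - n) := by
    rw [polyD, ← Finset.mul_prod_erase (S.erase Md) (fun n => Md - n) hmdin]
  have herase : (S.erase md).erase Md = T := by
    rw [hT]; ext x
    simp only [Finset.mem_erase]
    tauto
  have dB : polyDrev g = N * ∏ n ∈ T, (n - md) := by
    rw [polyDrev, ← Finset.mul_prod_erase (S.erase md) (fun n => n - md) hMdin, herase]
  have hstep : ∀ n ∈ T, min (Md - n) (n - md) * N ≤ 2 * ((Md - n) * (n - md)) := by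
    intro n hn
    obtain ⟨h1, h2⟩ := hTmem n hn
    have hab : (Md - n) + (n - md) = N := by omega
    rw [← hab]
    rcases le_total (Md - n) (n - md) with h | h
    · rw [min_eq_left h]; nlinarith
    · rw [min_eq_right h]; nlinarith
  have prodB : (∏ n ∈ T, min (Md - n) (n - md)) * N^t ≤ 2^t * ∏ n ∈ T, ((Md - n) * (n - md)) := by
    calc (∏ n ∈ T, min (Md - n) (n - md)) * N^t
        = ∏ n ∈ T, (min (Md - n) (n - md) * N) := by
          rw [Finset.prod_mul_distrib, Finset.prod_const, hTcard]
      _ ≤ ∏ n ∈ T, (2 * ((Md - n) * (n - md))) := Finset.prod_le_prod' hstep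
      _ = 2^t * ∏ n ∈ T, ((Md - n) * (n - md)) := by
          rw [Finset.prod_mul_distrib, Finset.prod_const, hTcard]
  set T1 := T.filter (fun n => Md - n ≤ n - md) with hT1
  set T2 := T.filter (fun n => ¬(Md - n ≤ n - md)) with hT2
  have hprodsplit : ∏ n ∈ T, min (Md - n) (n - md)
      = (∏ n ∈ T1, (Md - n)) * (∏ n ∈ T2, (n - md)) := by
    rw [← Finset.prod_filter_mul_prod_filter_not T (fun n => Md - n ≤ n - md)
        (fun n => min (Md - n) (n - md))]
    congr 1
    · exact Finset.prod_congr rfl (fun n hn => min_eq_left (Finset.mem_filter.mp hn).2)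
    · refine Finset.prod_congr rfl (fun n hn => ?_)
      have h := (Finset.mem_filter.mp hn).2
      exact min_eq_right (by omega)
  have hfact1 : T1.card ! ≤ ∏ n ∈ T1, (Md - n) := by
    have hinj : ∀ x ∈ T1, ∀ y ∈ T1, Md - x = Md - y → x = y := by
      intro x hx y hy hxy
      have hx' := hTmem x (Finset.mem_filter.mp hx).1
      have hy' := hTmem y (Finset.mem_filter.mp hy).1
      omega
    have himg : ∏ v ∈ T1.image (fun n => Md - n), v = ∏ n ∈ T1, (Md - n) :=
      Finset.prod_image hinj
    have hcard : (T1.image (fun n => Md - n)).card = T1.card :=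
      Finset.card_image_of_injOn (fun x hx y hy h => hinj x hx y hy h)
    have h0 : 0 ∉ T1.image (fun n => Md - n) := by
      simp only [Finset.mem_image, not_exists]
      rintro n ⟨hn, h0⟩
      have := hTmem n (Finset.mem_filter.mp hn).1
      omega
    calc T1.card ! = (T1.image (fun n => Md - n)).card ! := by rw [hcard]
      _ ≤ ∏ v ∈ T1.image (fun n => Md - n), v := prod_ge_factorial _ h0
      _ = _ := himg
  have hfact2 : T2.card ! ≤ ∏ n ∈ T2, (n - md) := by
    have hinj : ∀ x ∈ T2, ∀ y ∈ T2, x - md = y - md → x = y := by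
      intro x hx y hy hxy
      have hx' := hTmem x (Finset.mem_filter.mp hx).1
      have hy' := hTmem y (Finset.mem_filter.mp hy).1
      omega
    have himg : ∏ v ∈ T2.image (fun n => n - md), v = ∏ n ∈ T2, (n - md) :=
      Finset.prod_image hinj
    have hcard : (T2.image (fun n => n - md)).card = T2.card :=
      Finset.card_image_of_injOn (fun x hx y hy h => hinj x hx y hy h)
    have h0 : 0 ∉ T2.image (fun n => n - md) := by
      simp only [Finset.mem_image, not_exists]
      rintro n ⟨hn, h0⟩
      have := hTmem n (Finset.mem_filter.mp hn).1
      omega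
    calc T2.card ! = (T2.image (fun n => n - md)).card ! := by rw [hcard]
      _ ≤ ∏ v ∈ T2.image (fun n => n - md), v := prod_ge_factorial _ h0
      _ = _ := himg
  have hcards : T1.card + T2.card = t := by
    rw [hT1, hT2, Finset.card_filter_add_card_filter_not, hTcard]
  have hCfact : k ! * k ! ≤ ∏ n ∈ T, min (Md - n) (n - md) := by
    rw [hprodsplit]
    calc k ! * k ! ≤ T1.card ! * T2.card ! := split_fact t _ _ hcards
      _ ≤ _ := Nat.mul_le_mul hfact1 hfact2
  have hdd : polyD g * polyDrev g = N^2 * ∏ n ∈ T, ((Md - n) * (n - md)) := by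
    rw [dA, dB, Finset.prod_mul_distrib]
    ring
  have hmaxsq : polyD g * polyDrev g ≤ (max (polyD g) (polyDrev g))^2 := by
    rw [sq]
    exact Nat.mul_le_mul (le_max_left _ _) (le_max_right _ _)
  have KEY : N^s * (k !)^2 ≤ 2^t * (max (polyD g) (polyDrev g))^2 := by
    calc N^s * (k !)^2 = N^2 * ((k ! * k !) * N^t) := by
          rw [show s = t + 2 from by omega, pow_add]; ring
      _ ≤ N^2 * ((∏ n ∈ T, min (Md - n) (n - md)) * N^t) :=
          Nat.mul_le_mul_left _ (Nat.mul_le_mul_right _ hCfact)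
      _ ≤ N^2 * (2^t * ∏ n ∈ T, ((Md - n) * (n - md))) := Nat.mul_le_mul_left _ prodB
      _ = 2^t * (polyD g * polyDrev g) := by rw [hdd]; ring
      _ ≤ 2^t * (max (polyD g) (polyDrev g))^2 := Nat.mul_le_mul_left _ hmaxsq
  -- Real part
  set e := Real.exp 1 with he
  have hepos : (0:ℝ) < e := Real.exp_pos 1
  set L : ℝ := ((max (polyD g) (polyDrev g) : ℕ) : ℝ) with hL
  have hL0 : (0:ℝ) ≤ L := Nat.cast_nonneg _
  have hBcast : (Md:ℝ) - (md:ℝ) = ((N:ℕ):ℝ) := by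
    rw [hN, Nat.cast_sub (show md ≤ Md by omega)]
  rw [ge_iff_le, hBcast]
  have hspos : (0:ℝ) < (s:ℝ) := by exact_mod_cast (show 0 < s by omega)
  have hNpos : (0:ℝ) < ((N:ℕ):ℝ) := by exact_mod_cast (show 0 < N by omega)
  have hA : (0:ℝ) < (s:ℝ)/(2*e) := by positivity
  have hB : (0:ℝ) < ((N:ℕ):ℝ)/e := by positivity
  set R : ℝ := ((s:ℝ)/(2*e)) ^ ((s:ℝ)/2 - 1) * (((N:ℕ):ℝ)/e) ^ ((s:ℝ)/2) with hR
  have hR0 : (0:ℝ) ≤ R := by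
    rw [hR]
    positivity
  suffices hsq : R^2 ≤ L^2 by
    by_contra hc
    push_neg at hc
    nlinarith
  have hcast_t : ((t:ℕ):ℝ) = (s:ℝ) - 2 := by
    rw [ht, Nat.cast_sub hs2]; norm_num
  have e1 : (((s:ℝ)/(2*e)) ^ ((s:ℝ)/2 - 1))^(2:ℕ) = ((s:ℝ)/(2*e))^t := by
    rw [← Real.rpow_natCast (((s:ℝ)/(2*e)) ^ ((s:ℝ)/2 - 1)) 2, ← Real.rpow_mul hA.le,
        ← Real.rpow_natCast ((s:ℝ)/(2*e)) t, hcast_t]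
    congr 1
    push_cast
    ring
  have e2 : ((((N:ℕ):ℝ)/e) ^ ((s:ℝ)/2))^(2:ℕ) = (((N:ℕ):ℝ)/e)^s := by
    rw [← Real.rpow_natCast ((((N:ℕ):ℝ)/e) ^ ((s:ℝ)/2)) 2, ← Real.rpow_mul hB.le,
        ← Real.rpow_natCast (((N:ℕ):ℝ)/e) s]
    congr 1
    push_cast
    ring
  have hexp : R^2 = ((s:ℝ)/(2*e))^t * (((N:ℕ):ℝ)/e)^s := by
    rw [hR, mul_pow, e1, e2]
  rw [hexp, div_pow, div_pow, _root_.div_mul_div_comm, div_le_iff₀ (by positivity)]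
  have hcore := core s hs2
  rw [← ht, ← hk] at hcore
  have hKEYcast : ((N:ℕ):ℝ)^s * ((k ! : ℕ):ℝ)^2 ≤ (2:ℝ)^t * L^2 := by
    rw [hL]
    exact_mod_cast KEY
  calc (s:ℝ)^t * ((N:ℕ):ℝ)^s
      ≤ (((k ! : ℕ):ℝ)^2 * e^(2*s-2)) * ((N:ℕ):ℝ)^s :=
        mul_le_mul_of_nonneg_right hcore (by positivity)
    _ = e^(2*s-2) * (((N:ℕ):ℝ)^s * ((k ! : ℕ):ℝ)^2) := by ring
    _ ≤ e^(2*s-2) * ((2:ℝ)^t * L^2) := mul_le_mul_of_nonneg_left hKEYcast (by positivity)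
    _ = L^2 * ((2*e)^t * e^s) := by
        rw [mul_pow, show 2*s-2 = t + s from by omega, pow_add]
        ring

end Aux
end
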